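/- For the qubit SIC-POVM with Bloch vectors a_1 = (0,0,1), a_2 = (√8/3, 0, -1/3), a_3 = (-√2/3, √6/3, -1/3), a_4 = (-√2/3, -√6/3, -1/3) and weights p_i = 1/2, the function f(x) = Σ_i (1/2) Θ(x·a_i) satisfies f(x) ≤ 1 for every x ∈ R^3 with |x| ≤ √3. -/

import Mathlib

open RealInnerProductSpace

/-- The four Bloch vectors of the qubit SIC-POVM (regular tetrahedron vertices). -/
noncomputable def sicVec : Fin 4 → EuclideanSpace ℝ (Fin 3)
  | 0 => !₂[0, 0, 1]
  | 1 => !₂[Real.sqrt 8 / 3, 0, -1 / 3]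
  | 2 => !₂[-Real.sqrt 2 / 3, Real.sqrt 6 / 3, -1 / 3]
  | 3 => !₂[-Real.sqrt 2 / 3, -Real.sqrt 6 / 3, -1 / 3]

/-!
The positive part of `⟪x, aᵢ⟫` vanishes off the set `S` of indices with `⟪x, aᵢ⟫ ≥ 0`, so
`∑ᵢ Θ(⟪x, aᵢ⟫) = ⟪x, ∑_{i ∈ S} aᵢ⟫ ≤ ‖x‖ ‖∑_{i ∈ S} aᵢ‖`. Since the Bloch vectors are unit
vectors with pairwise inner products `-1/3`, a sum of `k` of them has squared norm
`k - k(k-1)/3 = k(4-k)/3 ≤ 4/3`, hence `f(x) ≤ ½ · √3 · 2/√3 = 1`.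
-/

section

variable {E : Type*} [NormedAddCommGroup E] [InnerProductSpace ℝ E] {ι : Type*}

theorem sum_max_inner_zero_eq_inner_sum_filter (s : Finset ι) (a : ι → E) (x : E) :
    ∑ i ∈ s, max ⟪x, a i⟫ 0 = ⟪x, ∑ i ∈ s with 0 ≤ ⟪x, a i⟫, a i⟫ := by
  rw [inner_sum, Finset.sum_filter]
  refine Finset.sum_congr rfl fun i _ => ?_
  split_ifs with h
  · exact max_eq_left h
  · exact max_eq_right (not_le.mp h).le

theorem norm_sq_sum_of_inner_eq_ite [DecidableEq ι] {a : ι → E} {c : ℝ}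
    (h : ∀ i j, ⟪a i, a j⟫ = if i = j then 1 else c) (s : Finset ι) :
    ‖∑ i ∈ s, a i‖ ^ 2 = s.card + s.card * (s.card - 1) * c := by
  have row : ∀ i ∈ s, ∑ j ∈ s, ⟪a i, a j⟫ = 1 + (s.card - 1) * c := by
    intro i hi
    simp_rw [h]
    rw [← Finset.add_sum_erase s _ hi, Finset.sum_congr rfl fun j hj =>
      if_neg (Finset.ne_of_mem_erase hj).symm, Finset.sum_const, Finset.card_erase_of_mem hi,
      nsmul_eq_mul, Nat.cast_pred (Finset.card_pos.mpr ⟨i, hi⟩), if_pos rfl]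
  rw [← real_inner_self_eq_norm_sq, sum_inner]
  simp_rw [inner_sum]
  rw [Finset.sum_congr rfl row, Finset.sum_const, nsmul_eq_mul]
  ring

end

theorem inner_sicVec (i j : Fin 4) :
    ⟪sicVec i, sicVec j⟫ = if i = j then 1 else -1 / 3 := by
  have h2 : Real.sqrt 2 * Real.sqrt 2 = 2 := Real.mul_self_sqrt (by norm_num)
  have h6 : Real.sqrt 6 * Real.sqrt 6 = 6 := Real.mul_self_sqrt (by norm_num)
  have h8 : Real.sqrt 8 * Real.sqrt 8 = 8 := Real.mul_self_sqrt (by norm_num)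
  have h82 : Real.sqrt 8 * Real.sqrt 2 = 4 := by
    rw [← Real.sqrt_mul (by norm_num)]
    norm_num
  fin_cases i <;> fin_cases j <;>
    simp only [sicVec, PiLp.inner_apply, RCLike.inner_apply, conj_trivial, Fin.sum_univ_three,
      Matrix.cons_val_zero, Matrix.cons_val_one, Matrix.cons_val, Fin.isValue, Fin.reduceFinMk,
      Fin.mk_one, Fin.zero_eta, Fin.reduceEq, ↓reduceIte] <;>
    nlinarith [h2, h6, h8, h82]

theorem norm_sq_sum_sicVec_le (s : Finset (Fin 4)) : ‖∑ i ∈ s, sicVec i‖ ^ 2 ≤ 4 / 3 := by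
  rw [norm_sq_sum_of_inner_eq_ite inner_sicVec]
  nlinarith [sq_nonneg ((s.card : ℝ) - 2)]

theorem sic_f_le_one (x : EuclideanSpace ℝ (Fin 3)) (hx : ‖x‖ ≤ Real.sqrt 3) :
    ∑ i : Fin 4, (1 / 2 : ℝ) * max ⟪x, sicVec i⟫ 0 ≤ 1 := by
  set b := ∑ i with 0 ≤ ⟪x, sicVec i⟫, sicVec i
  have hx2 : ‖x‖ ^ 2 ≤ 3 := by
    simpa using pow_le_pow_left₀ (norm_nonneg x) hx 2
  have hb2 : ‖b‖ ^ 2 ≤ 4 / 3 := norm_sq_sum_sicVec_le _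
  have hxb : ‖x‖ * ‖b‖ ≤ 2 := by
    refine abs_le_of_sq_le_sq' ?_ (by norm_num) |>.2
    nlinarith [mul_le_mul hx2 hb2 (sq_nonneg _) (by norm_num)]
  calc ∑ i : Fin 4, (1 / 2 : ℝ) * max ⟪x, sicVec i⟫ 0
      = 1 / 2 * ⟪x, b⟫ := by rw [← Finset.mul_sum, sum_max_inner_zero_eq_inner_sum_filter]
    _ ≤ 1 / 2 * (‖x‖ * ‖b‖) := by gcongr; exact real_inner_le_norm x b
    _ ≤ 1 := by linarith
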